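/- arXiv:2001.06924 — 2 statements merged into one kernel-verified Lean document; each statement's English description precedes it below -/
import Mathlib

section
/- Let (Ω,ℱ,P) be a probability space, p ∈ [1,∞), f : ℝ^n × Ω → ℝ^m a Carathéodory function with f(·,ω) continuously differentiable, ‖f'(ξ,ω)‖ ≤ C_f uniformly, and f(ξ,·) ∈ L^p for each ξ. Let F(x)(ω) = f(x(ω),ω) be the superposition operator from 𝒳 = L^p(Ω;ℝ^n) to 𝒴 = L^p(Ω;ℝ^m), and let Y ⊂ 𝒴 be closed and convex with F(x) ∈ Y. Then the Clarke subdifferential of Φ(·) = dist(F(·),Y) at x is ∂Φ(x) = [F'(x)]* (N_Y(F(x)) ∩ B_{𝒴*}), where [F'(x)]* is the adjoint of the Gâteaux derivative [F'(x)h](ω) = f'(x(ω),ω)h(ω). -/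
open MeasureTheory Metric Filter
open scoped Topology ENNReal Pointwise

private theorem stmt6_le_add {a b : ℝ} (H : ∀ ε : ℝ, 0 < ε → a ≤ b + ε) : a ≤ b := by
  by_contra hc
  push_neg at hc
  have := H ((a - b) / 2) (by linarith)
  linarith

/-- Dominated convergence in `eLpNorm`: if `g k → 0` a.e., dominated by a fixed `Memℒp`
function, then `eLpNorm (g k) p P → 0`. -/
theorem stmt6_dct {Ω : Type*} [MeasurableSpace Ω] {P : Measure Ω}
    {E : Type*} [NormedAddCommGroup E] {p : ℝ≥0∞} (hp : p ≠ 0) (hp' : p ≠ ∞)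
    {g : ℕ → Ω → E} {b : Ω → ℝ}
    (hgm : ∀ k, AEStronglyMeasurable (g k) P) (hb : MemLp b p P)
    (hbd : ∀ k, ∀ᵐ ω ∂P, ‖g k ω‖ ≤ b ω)
    (h0 : ∀ᵐ ω ∂P, Tendsto (fun k => g k ω) atTop (𝓝 0)) :
    Tendsto (fun k => eLpNorm (g k) p P) atTop (𝓝 0) := by
  set pt := p.toReal with hpt
  have hpt0 : 0 < pt := ENNReal.toReal_pos hp hp'
  have hI : Tendsto (fun k => ∫⁻ ω, (‖g k ω‖₊ : ℝ≥0∞) ^ pt ∂P) atTop (𝓝 0) := by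
    have := tendsto_lintegral_of_dominated_convergence' (μ := P)
      (F := fun k ω => (‖g k ω‖₊ : ℝ≥0∞) ^ pt) (f := fun _ => 0)
      (fun ω => (‖b ω‖₊ : ℝ≥0∞) ^ pt)
      (fun k => (ENNReal.continuous_rpow_const.measurable.comp_aemeasurable (hgm k).enorm))
      (fun k => by
        filter_upwards [hbd k] with ω hω
        have h1 : (‖g k ω‖₊ : ℝ≥0∞) ≤ (‖b ω‖₊ : ℝ≥0∞) := by
          have h2 : ‖g k ω‖ ≤ ‖b ω‖ := hω.trans (le_abs_self _)
          exact_mod_cast (by exact_mod_cast h2 : ‖g k ω‖₊ ≤ ‖b ω‖₊)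
        exact ENNReal.rpow_le_rpow h1 hpt0.le)
      (by
        have h2 := lintegral_rpow_enorm_lt_top_of_eLpNorm_lt_top hp hp' hb.eLpNorm_lt_top
        exact h2.ne)
      (by
        filter_upwards [h0] with ω hω
        have h1 : Tendsto (fun k => (‖g k ω‖₊ : ℝ≥0∞)) atTop (𝓝 0) := by
          have := (continuous_nnnorm.tendsto (0 : E)).comp hω
          exact ENNReal.tendsto_coe.2 (by rw [nnnorm_zero] at this; exact this)
        have h2 : Tendsto (fun x : ℝ≥0∞ => x ^ pt) (𝓝 0) (𝓝 ((0 : ℝ≥0∞) ^ pt)) :=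
          (ENNReal.continuous_rpow_const.tendsto 0)
        rw [ENNReal.zero_rpow_of_pos hpt0] at h2
        exact h2.comp h1)
    simpa using this
  have h3 : Tendsto (fun k => (∫⁻ ω, (‖g k ω‖₊ : ℝ≥0∞) ^ pt ∂P) ^ (1 / pt)) atTop
      (𝓝 ((0 : ℝ≥0∞) ^ (1 / pt))) := (ENNReal.continuous_rpow_const.tendsto 0).comp hI
  rw [ENNReal.zero_rpow_of_pos (by positivity)] at h3
  refine h3.congr fun k => ?_
  exact (eLpNorm_eq_lintegral_rpow_enorm_toReal hp hp' : eLpNorm (g k) p P = _).symm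

set_option maxHeartbeats 1600000 in
/-- Abstract form of the Clarke subdifferential formula: if `F` is Lipschitz, strictly
(Hadamard-type) differentiable at `x` with derivative `A`, and `Y` is convex with `F x ∈ Y`,
then the set of functionals dominated by the Clarke directional derivative of
`dist (F ·) Y` at `x` is `A* (N_Y(F x) ∩ B*)`. -/
theorem stmt6_abstract {X E : Type*} [NormedAddCommGroup X] [NormedSpace ℝ X]
    [NormedAddCommGroup E] [NormedSpace ℝ E]
    (F : X → E) (Y : Set E) (hYconv : Convex ℝ Y)
    (x : X) (hxY : F x ∈ Y) (A : X →L[ℝ] E) (C : ℝ)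
    (hFLip : ∀ z w, ‖F z - F w‖ ≤ C * ‖z - w‖)
    (hkey : ∀ h : X, Tendsto (fun zτ : X × ℝ =>
        (zτ.2)⁻¹ • (F (zτ.1 + zτ.2 • h) - F zτ.1 - zτ.2 • A h))
        ((𝓝 x) ×ˢ (𝓝[>] 0)) (𝓝 0)) :
    {G : X →L[ℝ] ℝ | ∀ h, G h ≤ limsup (fun zτ : X × ℝ =>
        (infDist (F (zτ.1 + zτ.2 • h)) Y - infDist (F zτ.1) Y) / zτ.2) ((𝓝 x) ×ˢ (𝓝[>] 0))}
    = {G | ∃ g : E →L[ℝ] ℝ, (∀ v ∈ Y, g (v - F x) ≤ 0) ∧ ‖g‖ ≤ 1 ∧ G = g.comp A} := by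
  classical
  have hYne : Y.Nonempty := ⟨F x, hxY⟩
  have hψ0 : infDist (F x) Y = 0 := infDist_zero_of_mem hxY
  -- 1-Lipschitz property of the distance function
  have lip : ∀ y₁ y₂ : E, infDist y₁ Y - infDist y₂ Y ≤ ‖y₁ - y₂‖ := by
    intro y₁ y₂
    have := infDist_le_infDist_add_dist (x := y₁) (y := y₂) (s := Y)
    rw [dist_eq_norm] at this
    linarith
  set Fl : Filter (X × ℝ) := (𝓝 x) ×ˢ (𝓝[>] (0 : ℝ)) with hFl
  set Q : X → X × ℝ → ℝ := fun h zτ =>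
    (infDist (F (zτ.1 + zτ.2 • h)) Y - infDist (F zτ.1) Y) / zτ.2 with hQ
  have hFLip' : ∀ z w, ‖F z - F w‖ ≤ |C| * ‖z - w‖ := fun z w =>
    (hFLip z w).trans (mul_le_mul_of_nonneg_right (le_abs_self C) (norm_nonneg _))
  have hFx : Tendsto F (𝓝 x) (𝓝 (F x)) := by
    rw [tendsto_iff_norm_sub_tendsto_zero]
    have h1 : Tendsto (fun z : X => |C| * ‖z - x‖) (𝓝 x) (𝓝 (|C| * 0)) :=
      tendsto_const_nhds.mul (tendsto_iff_norm_sub_tendsto_zero.mp tendsto_id)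
    rw [mul_zero] at h1
    exact squeeze_zero (fun z => norm_nonneg _) (fun z => hFLip' z x) h1
  have hτpos : ∀ᶠ zτ in Fl, (0 : ℝ) < zτ.2 :=
    (eventually_mem_nhdsWithin.mono fun τ hτ => hτ).prod_inr (𝓝 x)
  -- eventual two-sided bound on the difference quotients
  have hQabs : ∀ h, ∀ᶠ zτ in Fl, |Q h zτ| ≤ |C| * ‖h‖ := by
    intro h
    filter_upwards [hτpos] with zτ hτ
    have h1 : |infDist (F (zτ.1 + zτ.2 • h)) Y - infDist (F zτ.1) Y|
        ≤ ‖F (zτ.1 + zτ.2 • h) - F zτ.1‖ := by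
      rw [abs_sub_le_iff]
      refine ⟨lip _ _, ?_⟩
      have := lip (F zτ.1) (F (zτ.1 + zτ.2 • h))
      rwa [norm_sub_rev] at this
    have h2 : ‖F (zτ.1 + zτ.2 • h) - F zτ.1‖ ≤ |C| * (zτ.2 * ‖h‖) := by
      have h3 := hFLip' (zτ.1 + zτ.2 • h) zτ.1
      have h4 : ‖zτ.1 + zτ.2 • h - zτ.1‖ = zτ.2 * ‖h‖ := by
        rw [add_sub_cancel_left, norm_smul, Real.norm_eq_abs, abs_of_pos hτ]
      rw [h4] at h3
      exact h3
    rw [hQ]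
    simp only
    rw [abs_div, abs_of_pos hτ, div_le_iff₀ hτ]
    calc |infDist (F (zτ.1 + zτ.2 • h)) Y - infDist (F zτ.1) Y|
        ≤ |C| * (zτ.2 * ‖h‖) := h1.trans h2
      _ = |C| * ‖h‖ * zτ.2 := by ring
  have hbddA : ∀ h, IsBoundedUnder (· ≤ ·) Fl (Q h) := fun h =>
    ⟨|C| * ‖h‖, eventually_map.mpr ((hQabs h).mono fun zτ hz => (abs_le.mp hz).2)⟩
  have hcobdd : ∀ h, IsCoboundedUnder (· ≤ ·) Fl (Q h) := fun h =>
    isCoboundedUnder_le_of_eventually_le Fl (x := -(|C| * ‖h‖))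
      ((hQabs h).mono fun zτ hz => (abs_le.mp hz).1)
  -- convexity of the distance function
  have hconv : ∀ (y₁ y₂ : E) (a b : ℝ), 0 ≤ a → 0 ≤ b → a + b = 1 →
      infDist (a • y₁ + b • y₂) Y ≤ a * infDist y₁ Y + b * infDist y₂ Y := by
    intro y₁ y₂ a b ha hb hab
    apply stmt6_le_add
    intro ε hε
    obtain ⟨v₁, hv₁Y, hv₁⟩ := (infDist_lt_iff hYne).mp
      (lt_add_of_pos_right (infDist y₁ Y) hε)
    obtain ⟨v₂, hv₂Y, hv₂⟩ := (infDist_lt_iff hYne).mp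
      (lt_add_of_pos_right (infDist y₂ Y) hε)
    have hmem : a • v₁ + b • v₂ ∈ Y := hYconv hv₁Y hv₂Y ha hb hab
    have hd1 : ‖y₁ - v₁‖ ≤ infDist y₁ Y + ε := by rw [← dist_eq_norm]; exact hv₁.le
    have hd2 : ‖y₂ - v₂‖ ≤ infDist y₂ Y + ε := by rw [← dist_eq_norm]; exact hv₂.le
    calc infDist (a • y₁ + b • y₂) Y
        ≤ dist (a • y₁ + b • y₂) (a • v₁ + b • v₂) := infDist_le_dist_of_mem hmem
      _ = ‖a • (y₁ - v₁) + b • (y₂ - v₂)‖ := by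
          rw [dist_eq_norm]; congr 1
          rw [smul_sub, smul_sub]; abel
      _ ≤ a * ‖y₁ - v₁‖ + b * ‖y₂ - v₂‖ := by
          refine (norm_add_le _ _).trans ?_
          rw [norm_smul, norm_smul, Real.norm_eq_abs, Real.norm_eq_abs,
            abs_of_nonneg ha, abs_of_nonneg hb]
      _ ≤ a * (infDist y₁ Y + ε) + b * (infDist y₂ Y + ε) :=
          add_le_add (mul_le_mul_of_nonneg_left hd1 ha) (mul_le_mul_of_nonneg_left hd2 hb)
      _ = a * infDist y₁ Y + b * infDist y₂ Y + ε := by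
          have : a * (infDist y₁ Y + ε) + b * (infDist y₂ Y + ε)
              = a * infDist y₁ Y + b * infDist y₂ Y + (a + b) * ε := by ring
          rw [this, hab, one_mul]
  -- monotonicity of difference quotients of the convex distance function
  have hmono : ∀ (y k : E) (τ s : ℝ), 0 < τ → τ ≤ s →
      (infDist (y + τ • k) Y - infDist y Y) / τ
        ≤ (infDist (y + s • k) Y - infDist y Y) / s := by
    intro y k τ s hτ hτs
    have hs : 0 < s := hτ.trans_le hτs
    have ha : (0 : ℝ) ≤ 1 - τ / s := by
      rw [sub_nonneg]; exact (div_le_one hs).mpr hτs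
    have hb : (0 : ℝ) ≤ τ / s := by positivity
    have key := hconv y (y + s • k) (1 - τ / s) (τ / s) ha hb (by ring)
    have heq : (1 - τ / s) • y + (τ / s) • (y + s • k) = y + τ • k := by
      rw [smul_add, smul_smul, div_mul_cancel₀ _ hs.ne']
      rw [sub_smul, one_smul]
      abel
    rw [heq] at key
    rw [div_le_div_iff₀ hτ hs]
    have key' : s * infDist (y + τ • k) Y
        ≤ (s - τ) * infDist y Y + τ * infDist (y + s • k) Y := by
      have h' := mul_le_mul_of_nonneg_left key hs.le
      calc s * infDist (y + τ • k) Y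
          ≤ s * ((1 - τ / s) * infDist y Y + (τ / s) * infDist (y + s • k) Y) := h'
        _ = (s - τ) * infDist y Y + τ * infDist (y + s • k) Y := by
            field_simp
    nlinarith [key']
  -- the sublinear function q = directional derivative of dist(·,Y) at F x
  set Sq : E → Set ℝ := fun k =>
    (fun s : ℝ => infDist (F x + s • k) Y / s) '' Set.Ioi (0 : ℝ) with hSq
  set q : E → ℝ := fun k => sInf (Sq k) with hq
  have hSne : ∀ k, (Sq k).Nonempty := fun k => ⟨_, ⟨1, Set.mem_Ioi.mpr one_pos, rfl⟩⟩
  have hSbdd : ∀ k, BddBelow (Sq k) := by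
    intro k
    refine ⟨0, ?_⟩
    rintro v ⟨s, hs, rfl⟩
    exact div_nonneg infDist_nonneg (le_of_lt hs)
  have hqle : ∀ k (s : ℝ), 0 < s → q k ≤ infDist (F x + s • k) Y / s := fun k s hs =>
    csInf_le (hSbdd k) ⟨s, Set.mem_Ioi.mpr hs, rfl⟩
  have hqnn : ∀ k, 0 ≤ q k := fun k =>
    le_csInf (hSne k) (by rintro v ⟨s, hs, rfl⟩; exact div_nonneg infDist_nonneg hs.le)
  have hqnorm : ∀ k, q k ≤ ‖k‖ := by
    intro k
    refine (hqle k 1 one_pos).trans ?_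
    have h1 := lip (F x + k) (F x)
    rw [hψ0, add_sub_cancel_left] at h1
    simpa using h1
  have hq0 : q 0 = 0 := by
    refine le_antisymm ?_ (hqnn 0)
    have := hqle 0 1 one_pos
    simpa [hψ0] using this
  -- subadditivity of q
  have hqadd : ∀ k₁ k₂, q (k₁ + k₂) ≤ q k₁ + q k₂ := by
    intro k₁ k₂
    have H : ∀ v₁ ∈ Sq k₁, ∀ v₂ ∈ Sq k₂, q (k₁ + k₂) ≤ v₁ + v₂ := by
      rintro v₁ ⟨s, hs, rfl⟩ v₂ ⟨t, ht, rfl⟩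
      rw [Set.mem_Ioi] at hs ht
      set r : ℝ := s * t / (s + t) with hr
      have hst : 0 < s + t := by positivity
      have hr0 : 0 < r := by positivity
      have hco : r / s + r / t = 1 := by rw [hr]; field_simp; ring
      have ha : F x + r • (k₁ + k₂)
          = (r / s) • (F x + s • k₁) + (r / t) • (F x + t • k₂) := by
        have e1 : (r / s) • (F x + s • k₁) = (r / s) • F x + r • k₁ := by
          rw [smul_add, smul_smul, div_mul_cancel₀ r hs.ne']
        have e2 : (r / t) • (F x + t • k₂) = (r / t) • F x + r • k₂ := by
          rw [smul_add, smul_smul, div_mul_cancel₀ r ht.ne']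
        have e3 : (r / s) • F x + (r / t) • F x = F x := by
          rw [← add_smul, hco, one_smul]
        rw [e1, e2, smul_add]
        nth_rewrite 1 [← e3]
        abel
      have hcv := hconv (F x + s • k₁) (F x + t • k₂) (r / s) (r / t)
        (by positivity) (by positivity) hco
      rw [← ha] at hcv
      have h1 : q (k₁ + k₂) ≤ infDist (F x + r • (k₁ + k₂)) Y / r := hqle _ r hr0
      have h2 : infDist (F x + r • (k₁ + k₂)) Y / r
          ≤ ((r / s) * infDist (F x + s • k₁) Y + (r / t) * infDist (F x + t • k₂) Y) / r := by
        gcongr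
      have h3 : ((r / s) * infDist (F x + s • k₁) Y + (r / t) * infDist (F x + t • k₂) Y) / r
          = infDist (F x + s • k₁) Y / s + infDist (F x + t • k₂) Y / t := by
        field_simp
      rw [h3] at h2
      exact h1.trans h2
    have h1 : ∀ v₂ ∈ Sq k₂, q (k₁ + k₂) - v₂ ≤ q k₁ := fun v₂ hv₂ =>
      le_csInf (hSne k₁) fun v₁ hv₁ => by have := H v₁ hv₁ v₂ hv₂; linarith
    have h2 : q (k₁ + k₂) - q k₁ ≤ q k₂ :=
      le_csInf (hSne k₂) fun v₂ hv₂ => by have := h1 v₂ hv₂; linarith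
    linarith
  -- positive homogeneity of q
  have hqsmul : ∀ c : ℝ, 0 < c → ∀ k, q (c • k) = c * q k := by
    intro c hc k
    have hset : Sq (c • k) = c • (Sq k) := by
      ext v
      constructor
      · rintro ⟨s, hs, rfl⟩
        rw [Set.mem_Ioi] at hs
        refine Set.mem_smul_set.mpr
          ⟨infDist (F x + (s * c) • k) Y / (s * c), ⟨s * c, Set.mem_Ioi.mpr (mul_pos hs hc), rfl⟩, ?_⟩
        show c • (infDist (F x + (s * c) • k) Y / (s * c)) = infDist (F x + s • c • k) Y / s
        rw [smul_eq_mul, smul_smul]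
        rw [mul_comm s c]
        field_simp
      · intro hv
        obtain ⟨v', hv', rfl⟩ := Set.mem_smul_set.mp hv
        obtain ⟨s, hs, rfl⟩ := hv'
        rw [Set.mem_Ioi] at hs
        refine ⟨s / c, Set.mem_Ioi.mpr (div_pos hs hc), ?_⟩
        show infDist (F x + (s / c) • c • k) Y / (s / c) = c • (infDist (F x + s • k) Y / s)
        rw [smul_smul, div_mul_cancel₀ _ hc.ne', smul_eq_mul]
        field_simp
    rw [hq]
    simp only
    rw [hset, Real.sInf_smul_of_nonneg hc.le, smul_eq_mul]
  -- upper bound: limsup ≤ q (A h)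
  have hupper : ∀ h, limsup (Q h) Fl ≤ q (A h) := by
    intro h
    apply stmt6_le_add
    intro ε hε
    have hkey2 : ∀ s : ℝ, 0 < s →
        limsup (Q h) Fl ≤ infDist (F x + s • A h) Y / s + ε := by
      intro s hs
      apply limsup_le_of_le (hcobdd h)
      have e1 : ∀ᶠ zτ in Fl, zτ.2 ∈ Set.Ioo (0 : ℝ) s :=
        Eventually.prod_inr (Ioo_mem_nhdsGT_of_mem ⟨le_refl (0 : ℝ), hs⟩ :
          ∀ᶠ τ in 𝓝[>] (0 : ℝ), τ ∈ Set.Ioo (0 : ℝ) s) (𝓝 x)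
      have hφ : Tendsto (fun z : X => (infDist (F z + s • A h) Y - infDist (F z) Y) / s)
          (𝓝 x) (𝓝 ((infDist (F x + s • A h) Y - infDist (F x) Y) / s)) := by
        have hc1 : Tendsto (fun z : X => infDist (F z + s • A h) Y) (𝓝 x)
            (𝓝 (infDist (F x + s • A h) Y)) :=
          ((continuous_infDist_pt Y).tendsto _).comp (hFx.add_const (s • A h))
        have hc2 : Tendsto (fun z : X => infDist (F z) Y) (𝓝 x)
            (𝓝 (infDist (F x) Y)) := ((continuous_infDist_pt Y).tendsto _).comp hFx
        exact (hc1.sub hc2).div_const s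
      have e2 : ∀ᶠ z in 𝓝 x, (infDist (F z + s • A h) Y - infDist (F z) Y) / s
          < infDist (F x + s • A h) Y / s + ε / 2 := by
        refine hφ.eventually_lt_const ?_
        rw [hψ0, sub_zero]
        linarith
      have e3 : ∀ᶠ zτ in Fl,
          ‖(zτ.2)⁻¹ • (F (zτ.1 + zτ.2 • h) - F zτ.1 - zτ.2 • A h)‖ < ε / 2 := by
        have hn : Tendsto (fun zτ : X × ℝ =>
            ‖(zτ.2)⁻¹ • (F (zτ.1 + zτ.2 • h) - F zτ.1 - zτ.2 • A h)‖) Fl (𝓝 0) := by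
          simpa using (hkey h).norm
        exact hn.eventually_lt_const (by linarith)
      filter_upwards [e1, e2.prod_inl (𝓝[>] (0 : ℝ)), e3, hτpos] with zτ h1 h2 h3 hτ0
      obtain ⟨-, hτs⟩ := h1
      have c1 : infDist (F (zτ.1 + zτ.2 • h)) Y
          ≤ infDist (F zτ.1 + zτ.2 • A h) Y + ‖F (zτ.1 + zτ.2 • h) - F zτ.1 - zτ.2 • A h‖ := by
        have hl := lip (F (zτ.1 + zτ.2 • h)) (F zτ.1 + zτ.2 • A h)
        have harg : F (zτ.1 + zτ.2 • h) - (F zτ.1 + zτ.2 • A h)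
            = F (zτ.1 + zτ.2 • h) - F zτ.1 - zτ.2 • A h := by abel
        rw [harg] at hl
        linarith
      have c2 : (infDist (F (zτ.1 + zτ.2 • h)) Y - infDist (F zτ.1) Y) / zτ.2
          ≤ (infDist (F zτ.1 + zτ.2 • A h) Y - infDist (F zτ.1) Y) / zτ.2
            + ‖F (zτ.1 + zτ.2 • h) - F zτ.1 - zτ.2 • A h‖ / zτ.2 := by
        rw [← add_div]
        gcongr
        linarith
      have c3 : (infDist (F zτ.1 + zτ.2 • A h) Y - infDist (F zτ.1) Y) / zτ.2
          ≤ (infDist (F zτ.1 + s • A h) Y - infDist (F zτ.1) Y) / s :=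
        hmono (F zτ.1) (A h) zτ.2 s hτ0 hτs.le
      have c4 : ‖F (zτ.1 + zτ.2 • h) - F zτ.1 - zτ.2 • A h‖ / zτ.2
          = ‖(zτ.2)⁻¹ • (F (zτ.1 + zτ.2 • h) - F zτ.1 - zτ.2 • A h)‖ := by
        rw [norm_smul, Real.norm_eq_abs, abs_inv, abs_of_pos hτ0, inv_mul_eq_div]
      show Q h zτ ≤ infDist (F x + s • A h) Y / s + ε
      have hQz : Q h zτ = (infDist (F (zτ.1 + zτ.2 • h)) Y - infDist (F zτ.1) Y) / zτ.2 := rfl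
      rw [hQz]
      rw [c4] at c2
      linarith
    have h1 : limsup (Q h) Fl - ε ≤ q (A h) := by
      refine le_csInf (hSne (A h)) ?_
      rintro v ⟨s, hs, rfl⟩
      rw [Set.mem_Ioi] at hs
      have := hkey2 s hs
      linarith
    linarith
  -- now prove the set equality
  ext G
  simp only [Set.mem_setOf_eq]
  constructor
  · -- ⊆ : Hahn-Banach extension
    intro hG
    have hGq : ∀ h, G h ≤ q (A h) := fun h => (hG h).trans (hupper h)
    have hker : ∀ h₁ h₂ : X, A h₁ = A h₂ → G h₁ = G h₂ := by
      intro h₁ h₂ hAe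
      have e1 : A (h₁ - h₂) = 0 := by rw [_root_.map_sub, hAe, sub_self]
      have e2 : G (h₁ - h₂) ≤ 0 := by
        have := hGq (h₁ - h₂); rwa [e1, hq0] at this
      have e3 : G (h₂ - h₁) ≤ 0 := by
        have h5 : A (h₂ - h₁) = 0 := by rw [_root_.map_sub, hAe, sub_self]
        have := hGq (h₂ - h₁); rwa [h5, hq0] at this
      rw [_root_.map_sub] at e2 e3
      linarith
    set D : Submodule ℝ E := LinearMap.range (A : X →ₗ[ℝ] E) with hD
    have hmemD : ∀ h : X, A h ∈ D := fun h => ⟨h, rfl⟩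
    let pick : D → X := fun y => Classical.choose (LinearMap.mem_range.mp y.2)
    have hpick : ∀ y : D, A (pick y) = (y : E) := fun y =>
      Classical.choose_spec (LinearMap.mem_range.mp y.2)
    let g₀ : D →ₗ[ℝ] ℝ :=
      { toFun := fun y => G (pick y)
        map_add' := by
          intro y z
          show G (pick (y + z)) = G (pick y) + G (pick z)
          have h5 : A (pick (y + z)) = A (pick y + pick z) := by
            rw [hpick, _root_.map_add, hpick, hpick]; rfl
          rw [hker _ _ h5, _root_.map_add]
        map_smul' := by
          intro c y
          show G (pick (c • y)) = c • G (pick y)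
          have h5 : A (pick (c • y)) = A (c • pick y) := by
            rw [hpick, _root_.map_smul, hpick]; rfl
          rw [hker _ _ h5, _root_.map_smul] }
    have hf₀ : ∀ y : (LinearPMap.mk D g₀).domain, (LinearPMap.mk D g₀) y ≤ q y := by
      rintro ⟨y, hy⟩
      rw [LinearPMap.mk_apply]
      show G (pick ⟨y, hy⟩) ≤ q y
      have := hGq (pick ⟨y, hy⟩)
      rwa [hpick ⟨y, hy⟩] at this
    obtain ⟨g', hg'ext, hg'le⟩ := exists_extension_of_le_sublinear (LinearPMap.mk D g₀) q
      (fun c hc k => hqsmul c hc k) hqadd hf₀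
    have hg'bound : ∀ y, |g' y| ≤ ‖y‖ := by
      intro y
      rw [abs_le]
      constructor
      · have h5 : g' (-y) ≤ q (-y) := hg'le (-y)
        have h6 : q (-y) ≤ ‖y‖ := (hqnorm (-y)).trans_eq (norm_neg y)
        rw [_root_.map_neg] at h5
        linarith
      · exact (hg'le y).trans (hqnorm y)
    let g : E →L[ℝ] ℝ := LinearMap.mkContinuous g' 1
      (fun y => by rw [Real.norm_eq_abs, one_mul]; exact hg'bound y)
    refine ⟨g, ?_, ?_, ?_⟩
    · intro v hv
      show g' (v - F x) ≤ 0
      have h5 : g' (v - F x) ≤ q (v - F x) := hg'le _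
      have h6 : q (v - F x) ≤ infDist (F x + (1 : ℝ) • (v - F x)) Y / 1 := hqle _ 1 one_pos
      have h7 : F x + (1 : ℝ) • (v - F x) = v := by rw [one_smul]; abel
      rw [h7] at h6
      have h8 : infDist v Y = 0 := infDist_zero_of_mem hv
      rw [h8] at h6
      simpa using h5.trans h6
    · exact LinearMap.mkContinuous_norm_le g' zero_le_one _
    · ext h
      show G h = g' (A h)
      have h5 := hg'ext ⟨A h, hmemD h⟩
      have h7 : G (pick ⟨A h, hmemD h⟩) = G h :=
        hker _ _ (by rw [hpick ⟨A h, hmemD h⟩])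
      rw [h5, LinearPMap.mk_apply]
      exact h7.symm
  · -- ⊇ : subgradient inequality and Gâteaux differentiability
    rintro ⟨g, hgN, hg1, rfl⟩ h
    simp only [ContinuousLinearMap.comp_apply]
    have hsub : ∀ y, g (y - F x) ≤ infDist y Y := by
      intro y
      refine le_of_not_gt fun hlt => ?_
      obtain ⟨v, hv, hd⟩ := (infDist_lt_iff hYne).mp hlt
      have h1 : g (y - F x) = g (y - v) + g (v - F x) := by
        rw [← _root_.map_add]; congr 1; abel
      have h2 : g (y - v) ≤ ‖y - v‖ := by
        calc g (y - v) ≤ |g (y - v)| := le_abs_self _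
          _ = ‖g (y - v)‖ := (Real.norm_eq_abs _).symm
          _ ≤ ‖g‖ * ‖y - v‖ := g.le_opNorm _
          _ ≤ 1 * ‖y - v‖ := mul_le_mul_of_nonneg_right hg1 (norm_nonneg _)
          _ = ‖y - v‖ := one_mul _
      rw [dist_eq_norm] at hd
      have h3 := hgN v hv
      linarith
    apply stmt6_le_add
    intro ε hε
    have hι : Tendsto (fun τ : ℝ => ((x, τ) : X × ℝ)) (𝓝[>] (0 : ℝ)) Fl :=
      Tendsto.prodMk tendsto_const_nhds tendsto_id
    have hVg : Tendsto (fun τ : ℝ =>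
        g (τ⁻¹ • (F (x + τ • h) - F x - τ • A h)) + g (A h)) (𝓝[>] (0 : ℝ))
        (𝓝 (0 + g (A h))) := by
      have h1 : Tendsto (fun τ : ℝ => g (τ⁻¹ • (F (x + τ • h) - F x - τ • A h)))
          (𝓝[>] (0 : ℝ)) (𝓝 (g 0)) :=
        (g.continuous.tendsto 0).comp ((hkey h).comp hι)
      rw [_root_.map_zero] at h1
      exact h1.add_const (g (A h))
    rw [zero_add] at hVg
    have hev : ∀ᶠ τ in 𝓝[>] (0 : ℝ), g (A h) - ε ≤ Q h (x, τ) := by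
      have hgt : ∀ᶠ τ in 𝓝[>] (0 : ℝ),
          g (A h) - ε < g (τ⁻¹ • (F (x + τ • h) - F x - τ • A h)) + g (A h) :=
        hVg.eventually_const_lt (by linarith)
      filter_upwards [hgt, eventually_mem_nhdsWithin] with τ h1 h2
      have hτ : (0 : ℝ) < τ := h2
      have heq : g (τ⁻¹ • (F (x + τ • h) - F x - τ • A h)) + g (A h)
          = g (τ⁻¹ • (F (x + τ • h) - F x)) := by
        rw [← _root_.map_add]
        congr 1
        rw [smul_sub, smul_sub, smul_smul, inv_mul_cancel₀ hτ.ne', one_smul]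
        abel
      rw [heq] at h1
      have h3 : g (τ⁻¹ • (F (x + τ • h) - F x)) = τ⁻¹ * g (F (x + τ • h) - F x) := by
        rw [_root_.map_smul]; rfl
      have h4 : g (F (x + τ • h) - F x) ≤ infDist (F (x + τ • h)) Y := hsub _
      have hQv : Q h (x, τ) = (infDist (F (x + τ • h)) Y - infDist (F x) Y) / τ := rfl
      rw [hQv, hψ0, sub_zero]
      rw [h3] at h1
      have h5 : τ⁻¹ * g (F (x + τ • h) - F x) ≤ τ⁻¹ * infDist (F (x + τ • h)) Y :=
        mul_le_mul_of_nonneg_left h4 (by positivity)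
      rw [div_eq_inv_mul]
      linarith
    have hfreq : ∃ᶠ zτ in Fl, g (A h) - ε ≤ Q h zτ := hι.frequently hev.frequently
    have := le_limsup_of_frequently_le hfreq (hbddA h)
    linarith

set_option maxHeartbeats 1600000 in
set_option synthInstance.maxHeartbeats 1000000 in
/-- Clarke subdifferential of `Φ(·) = dist(F(·),Y)` for a superposition operator
`F(x)(ω) = f(x(ω),ω)` on `L^p` with a closed convex `Y ∋ F(x)`:
`∂Φ(x) = [F'(x)]* (N_Y(F(x)) ∩ B_{𝒴*})`, where `[F'(x)h](ω) = f'(x(ω),ω) h(ω)`.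
The Clarke subdifferential is the set of continuous linear functionals dominated by
the Clarke directional derivative `Φ°(x;·)`, and each element of the right-hand side
is `g ∘ F'(x)` with `g` in the normal cone to `Y` at `F(x)` of dual norm at most 1. -/
theorem stmt6 {Ω : Type*} [MeasurableSpace Ω] (P : Measure Ω) [IsProbabilityMeasure P]
    {n m : ℕ} (p : ℝ≥0∞) [Fact (1 ≤ p)] (hp' : p ≠ ∞)
    (f : EuclideanSpace ℝ (Fin n) → Ω → EuclideanSpace ℝ (Fin m)) (Cf : ℝ)
    (hf1 : ∀ ξ, MemLp (f ξ) p P)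
    (hf2 : ∀ᵐ ω ∂P, ContDiff ℝ 1 (fun ξ => f ξ ω))
    (hf3 : ∀ᵐ ω ∂P, ∀ ξ, ‖fderiv ℝ (fun ξ' => f ξ' ω) ξ‖ ≤ Cf)
    (F : Lp (EuclideanSpace ℝ (Fin n)) p P → Lp (EuclideanSpace ℝ (Fin m)) p P)
    (hF : ∀ x, (F x : Ω → EuclideanSpace ℝ (Fin m)) =ᵐ[P] fun ω => f (x ω) ω)
    (Y : Set (Lp (EuclideanSpace ℝ (Fin m)) p P)) (hYcl : IsClosed Y)
    (hYconv : Convex ℝ Y)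
    (x : Lp (EuclideanSpace ℝ (Fin n)) p P) (hxY : F x ∈ Y)
    (A : Lp (EuclideanSpace ℝ (Fin n)) p P →L[ℝ] Lp (EuclideanSpace ℝ (Fin m)) p P)
    (hA : ∀ h, (A h : Ω → EuclideanSpace ℝ (Fin m)) =ᵐ[P]
      fun ω => fderiv ℝ (fun ξ' => f ξ' ω) (x ω) (h ω)) :
    {G : Lp (EuclideanSpace ℝ (Fin n)) p P →L[ℝ] ℝ |
        ∀ h, G h ≤ limsup
          (fun zτ : Lp (EuclideanSpace ℝ (Fin n)) p P × ℝ =>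
            (infDist (F (zτ.1 + zτ.2 • h)) Y - infDist (F zτ.1) Y) / zτ.2)
          ((𝓝 x) ×ˢ (𝓝[>] 0))}
      = {G | ∃ g : Lp (EuclideanSpace ℝ (Fin m)) p P →L[ℝ] ℝ,
          (∀ v ∈ Y, g (v - F x) ≤ 0) ∧ ‖g‖ ≤ 1 ∧ G = g.comp A} := by
  classical
  have hp1 : (1 : ℝ≥0∞) ≤ p := Fact.out
  have hp0 : p ≠ 0 := by
    intro hc
    rw [hc] at hp1
    simp at hp1
  haveI : (ae P).NeBot := ae_neBot.mpr (IsProbabilityMeasure.ne_zero P)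
  have hCf : 0 ≤ Cf := by
    obtain ⟨ω, hω⟩ := hf3.exists
    exact le_trans (norm_nonneg _) (hω 0)
  -- pointwise Lipschitz bound
  have hLipf : ∀ᵐ ω ∂P, ∀ a b : EuclideanSpace ℝ (Fin n), ‖f b ω - f a ω‖ ≤ Cf * ‖b - a‖ := by
    filter_upwards [hf2, hf3] with ω h1 h2 a b
    exact convex_univ.norm_image_sub_le_of_norm_fderiv_le
      (fun ξ _ => (h1.differentiable one_ne_zero).differentiableAt) (fun ξ _ => h2 ξ)
      trivial trivial
  -- F is Lipschitz
  have hFLip : ∀ z w, ‖F z - F w‖ ≤ Cf * ‖z - w‖ := by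
    intro z w
    have h1 : ‖F z - F w‖ ≤ ‖Cf • (z - w)‖ := by
      rw [Lp.norm_def, Lp.norm_def]
      apply ENNReal.toReal_mono (Lp.eLpNorm_ne_top _)
      apply eLpNorm_mono_ae
      filter_upwards [hF z, hF w, Lp.coeFn_sub (F z) (F w), Lp.coeFn_smul Cf (z - w),
        Lp.coeFn_sub z w, hLipf] with ω e1 e2 e3 e4 e5 e6
      rw [e3, Pi.sub_apply, e1, e2, e4, Pi.smul_apply, e5, Pi.sub_apply]
      rw [norm_smul, Real.norm_eq_abs, abs_of_nonneg hCf]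
      exact e6 _ _
    calc ‖F z - F w‖ ≤ ‖Cf • (z - w)‖ := h1
      _ = Cf * ‖z - w‖ := by rw [norm_smul, Real.norm_eq_abs, abs_of_nonneg hCf]
  -- sequential strict differentiability
  have SEQ : ∀ (h : Lp (EuclideanSpace ℝ (Fin n)) p P)
      (z : ℕ → Lp (EuclideanSpace ℝ (Fin n)) p P) (τ : ℕ → ℝ),
      Tendsto z atTop (𝓝 x) → Tendsto τ atTop (𝓝 (0 : ℝ)) →
      Tendsto (fun k => (τ k)⁻¹ • (F (z k + τ k • h) - F (z k) - τ k • A h)) atTop (𝓝 0) := by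
    intro h z τ hz hτ
    apply tendsto_of_subseq_tendsto
    intro ns hns
    have h1 : Tendsto (fun k => eLpNorm (⇑(z (ns k)) - ⇑x) p P) atTop (𝓝 0) := by
      have heq : ∀ k, eLpNorm (⇑(z (ns k)) - ⇑x) p P = ENNReal.ofReal ‖z (ns k) - x‖ := by
        intro k
        rw [← eLpNorm_congr_ae (Lp.coeFn_sub (z (ns k)) x), Lp.norm_def,
          ENNReal.ofReal_toReal (Lp.eLpNorm_ne_top _)]
      rw [show (fun k => eLpNorm (⇑(z (ns k)) - ⇑x) p P)
          = fun k => ENNReal.ofReal ‖z (ns k) - x‖ from funext heq]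
      have h2 : Tendsto (fun k => ‖z (ns k) - x‖) atTop (𝓝 0) :=
        tendsto_iff_norm_sub_tendsto_zero.mp (hz.comp hns)
      have h3 := (ENNReal.continuous_ofReal.tendsto 0).comp h2
      rw [ENNReal.ofReal_zero] at h3
      exact h3
    have h2 : TendstoInMeasure P (fun k => ⇑(z (ns k))) atTop ⇑x :=
      tendstoInMeasure_of_tendsto_eLpNorm hp0
        (fun k => Lp.aestronglyMeasurable _) (Lp.aestronglyMeasurable _) h1
    obtain ⟨ms, hms, hae⟩ := h2.exists_seq_tendsto_ae
    refine ⟨ms, ?_⟩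
    set w : ℕ → ℕ := fun k => ns (ms k) with hw
    have hτw : Tendsto (fun k => τ (w k)) atTop (𝓝 0) := (hτ.comp hns).comp hms.tendsto_atTop
    set u : ℕ → Lp (EuclideanSpace ℝ (Fin m)) p P :=
      fun k => (τ (w k))⁻¹ • (F (z (w k) + τ (w k) • h) - F (z (w k)) - τ (w k) • A h) with hu
    -- a.e. pointwise representation of u k
    have hrep : ∀ k, ∀ᵐ ω ∂P, (u k : Ω → EuclideanSpace ℝ (Fin m)) ω
        = (τ (w k))⁻¹ • (f (z (w k) ω + τ (w k) • h ω) ω - f (z (w k) ω) ω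
            - τ (w k) • fderiv ℝ (fun ξ' => f ξ' ω) (x ω) (h ω)) := by
      intro k
      filter_upwards [Lp.coeFn_smul ((τ (w k))⁻¹)
          (F (z (w k) + τ (w k) • h) - F (z (w k)) - τ (w k) • A h),
        Lp.coeFn_sub (F (z (w k) + τ (w k) • h) - F (z (w k))) (τ (w k) • A h),
        Lp.coeFn_sub (F (z (w k) + τ (w k) • h)) (F (z (w k))),
        Lp.coeFn_smul (τ (w k)) (A h),
        hF (z (w k) + τ (w k) • h), hF (z (w k)), hA h,
        Lp.coeFn_add (z (w k)) (τ (w k) • h),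
        Lp.coeFn_smul (τ (w k)) h] with ω a1 a2 a3 a4 a5 a6 a7 a8 a9
      have hb1 : (z (w k) + τ (w k) • h : Lp (EuclideanSpace ℝ (Fin n)) p P) ω
          = z (w k) ω + τ (w k) • h ω := by
        rw [a8, Pi.add_apply, a9, Pi.smul_apply]
      rw [hu]
      show ((τ (w k))⁻¹ • (F (z (w k) + τ (w k) • h) - F (z (w k)) - τ (w k) • A h) :
          Lp (EuclideanSpace ℝ (Fin m)) p P) ω = _
      rw [a1, Pi.smul_apply, a2, Pi.sub_apply, a3, Pi.sub_apply, a4, Pi.smul_apply,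
        a5, a6, a7, hb1]
    -- dominated convergence
    have hSnorm : Tendsto (fun k => eLpNorm (⇑(u k)) p P) atTop (𝓝 0) := by
      apply stmt6_dct hp0 hp' (fun k => Lp.aestronglyMeasurable _)
        (b := fun ω => 2 * Cf * ‖h ω‖)
        (((Lp.memLp h).norm).const_mul (2 * Cf))
      · -- bound
        intro k
        filter_upwards [hrep k, hLipf, hf3] with ω hωr hωl hω3
        rw [hωr]
        rcases eq_or_ne (τ (w k)) 0 with h0 | h0
        · simp [h0]
          positivity
        · have hb1 : ‖f (z (w k) ω + τ (w k) • h ω) ω - f (z (w k) ω) ω‖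
              ≤ Cf * (|τ (w k)| * ‖h ω‖) := by
            have := hωl (z (w k) ω) (z (w k) ω + τ (w k) • h ω)
            rw [add_sub_cancel_left, norm_smul, Real.norm_eq_abs] at this
            exact this
          have hb2 : ‖fderiv ℝ (fun ξ' => f ξ' ω) (x ω) (h ω)‖ ≤ Cf * ‖h ω‖ :=
            ((fderiv ℝ (fun ξ' => f ξ' ω) (x ω)).le_opNorm (h ω)).trans
              (mul_le_mul_of_nonneg_right (hω3 (x ω)) (norm_nonneg _))
          rw [norm_smul, Real.norm_eq_abs, abs_inv]
          have hb3 : ‖f (z (w k) ω + τ (w k) • h ω) ω - f (z (w k) ω) ω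
              - τ (w k) • fderiv ℝ (fun ξ' => f ξ' ω) (x ω) (h ω)‖
              ≤ |τ (w k)| * (2 * Cf * ‖h ω‖) := by
            calc ‖f (z (w k) ω + τ (w k) • h ω) ω - f (z (w k) ω) ω
                - τ (w k) • fderiv ℝ (fun ξ' => f ξ' ω) (x ω) (h ω)‖
                ≤ ‖f (z (w k) ω + τ (w k) • h ω) ω - f (z (w k) ω) ω‖
                  + ‖τ (w k) • fderiv ℝ (fun ξ' => f ξ' ω) (x ω) (h ω)‖ := norm_sub_le _ _
              _ ≤ Cf * (|τ (w k)| * ‖h ω‖)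
                  + |τ (w k)| * (Cf * ‖h ω‖) := by
                  refine add_le_add hb1 ?_
                  rw [norm_smul, Real.norm_eq_abs]
                  exact mul_le_mul_of_nonneg_left hb2 (abs_nonneg _)
              _ = |τ (w k)| * (2 * Cf * ‖h ω‖) := by ring
          calc |τ (w k)|⁻¹ * ‖f (z (w k) ω + τ (w k) • h ω) ω - f (z (w k) ω) ω
              - τ (w k) • fderiv ℝ (fun ξ' => f ξ' ω) (x ω) (h ω)‖
              ≤ |τ (w k)|⁻¹ * (|τ (w k)| * (2 * Cf * ‖h ω‖)) :=
                mul_le_mul_of_nonneg_left hb3 (inv_nonneg.mpr (abs_nonneg _))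
            _ = 2 * Cf * ‖h ω‖ := by
                rw [← mul_assoc, inv_mul_cancel₀ (abs_ne_zero.mpr h0), one_mul]
      · -- a.e. convergence to 0
        filter_upwards [ae_all_iff.mpr hrep, hae, hf2, hf3] with ω hωr hωz hω2 hω3
        rw [tendsto_congr hωr]
        rw [NormedAddCommGroup.tendsto_nhds_zero]
        intro ε hε
        set Dm := fderiv ℝ (fun ξ' => f ξ' ω) with hDm
        have hDc : Continuous Dm := hω2.continuous_fderiv one_ne_zero
        set ε' := ε / (2 * (‖h ω‖ + 1)) with hε'
        have hε'0 : 0 < ε' := by positivity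
        obtain ⟨δ, hδ, hδ'⟩ := Metric.continuousAt_iff.mp hDc.continuousAt ε' hε'0
        have ev1 : ∀ᶠ k in atTop, dist (z (w k) ω) (x ω) < δ / 2 :=
          Metric.tendsto_nhds.mp hωz (δ / 2) (by positivity)
        have ev2 : ∀ᶠ k in atTop, |τ (w k)| * (‖h ω‖ + 1) < δ / 2 := by
          have h1 : Tendsto (fun k => |τ (w k)| * (‖h ω‖ + 1)) atTop
              (𝓝 (|(0 : ℝ)| * (‖h ω‖ + 1))) := (hτw.abs).mul_const _
          rw [abs_zero, zero_mul] at h1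
          exact h1.eventually_lt_const (by positivity)
        filter_upwards [ev1, ev2] with k h1 h2
        rcases eq_or_ne (τ (w k)) 0 with h0 | h0
        · simpa [h0] using hε
        · have hτa : 0 < |τ (w k)| := abs_pos.mpr h0
          have hτh : |τ (w k)| * ‖h ω‖ < δ / 2 :=
            lt_of_le_of_lt (mul_le_mul_of_nonneg_left
              (by linarith [norm_nonneg (h ω)] : ‖h ω‖ ≤ ‖h ω‖ + 1) (abs_nonneg _)) h2
          have ha_mem : z (w k) ω ∈ Metric.ball (x ω) δ := by
            rw [Metric.mem_ball]; linarith
          have hb_mem : z (w k) ω + τ (w k) • h ω ∈ Metric.ball (x ω) δ := by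
            rw [Metric.mem_ball]
            calc dist (z (w k) ω + τ (w k) • h ω) (x ω)
                ≤ dist (z (w k) ω + τ (w k) • h ω) (z (w k) ω) + dist (z (w k) ω) (x ω) :=
                  dist_triangle _ _ _
              _ < δ / 2 + δ / 2 := by
                  refine add_lt_add_of_le_of_lt ?_ h1
                  rw [dist_eq_norm, add_sub_cancel_left, norm_smul, Real.norm_eq_abs]
                  exact hτh.le
              _ = δ := by ring
          have hdiff : ∀ ξ ∈ Metric.ball (x ω) δ,
              DifferentiableAt ℝ (fun ξ' => f ξ' ω - Dm (x ω) ξ') ξ := fun ξ _ =>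
            ((hω2.differentiable one_ne_zero).differentiableAt).sub ((Dm (x ω)).differentiableAt)
          have hder : ∀ ξ ∈ Metric.ball (x ω) δ,
              ‖fderiv ℝ (fun ξ' => f ξ' ω - Dm (x ω) ξ') ξ‖ ≤ ε' := by
            intro ξ hξ
            rw [fderiv_fun_sub ((hω2.differentiable one_ne_zero).differentiableAt)
              ((Dm (x ω)).differentiableAt), (Dm (x ω)).fderiv]
            have h3 := hδ' (Metric.mem_ball.mp hξ)
            rw [dist_eq_norm] at h3
            exact h3.le
          have hmvt := (convex_ball (x ω) δ).norm_image_sub_le_of_norm_fderiv_le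
            hdiff hder ha_mem hb_mem
          have hba : (z (w k) ω + τ (w k) • h ω) - z (w k) ω = τ (w k) • h ω := by
            rw [add_sub_cancel_left]
          have hDba : Dm (x ω) (z (w k) ω + τ (w k) • h ω) - Dm (x ω) (z (w k) ω)
              = τ (w k) • Dm (x ω) (h ω) := by
            rw [← _root_.map_sub, hba, _root_.map_smul]
          have hnum : ‖f (z (w k) ω + τ (w k) • h ω) ω - f (z (w k) ω) ω
              - τ (w k) • Dm (x ω) (h ω)‖ ≤ ε' * (|τ (w k)| * ‖h ω‖) := by
            have hre : f (z (w k) ω + τ (w k) • h ω) ω - f (z (w k) ω) ω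
                - τ (w k) • Dm (x ω) (h ω)
                = (f (z (w k) ω + τ (w k) • h ω) ω - Dm (x ω) (z (w k) ω + τ (w k) • h ω))
                  - (f (z (w k) ω) ω - Dm (x ω) (z (w k) ω)) := by
              rw [← hDba]; abel
            rw [hre]
            refine hmvt.trans ?_
            rw [hba, norm_smul, Real.norm_eq_abs]
          rw [norm_smul, Real.norm_eq_abs, abs_inv]
          calc |τ (w k)|⁻¹ * ‖f (z (w k) ω + τ (w k) • h ω) ω - f (z (w k) ω) ω
              - τ (w k) • Dm (x ω) (h ω)‖
              ≤ |τ (w k)|⁻¹ * (ε' * (|τ (w k)| * ‖h ω‖)) :=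
                mul_le_mul_of_nonneg_left hnum (inv_nonneg.mpr (abs_nonneg _))
            _ = ε' * ‖h ω‖ * (|τ (w k)|⁻¹ * |τ (w k)|) := by ring
            _ = ε' * ‖h ω‖ := by
                rw [inv_mul_cancel₀ (abs_ne_zero.mpr h0), mul_one]
            _ < ε := by
                rw [hε']
                rw [div_mul_eq_mul_div, div_lt_iff₀ (by positivity)]
                nlinarith [norm_nonneg (h ω)]
    -- conclude convergence in Lp
    show Tendsto (fun k => u k) atTop (𝓝 0)
    rw [tendsto_zero_iff_norm_tendsto_zero]
    have h3 := (ENNReal.tendsto_toReal (by simp : (0 : ℝ≥0∞) ≠ ⊤)).comp hSnorm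
    simp only [ENNReal.toReal_zero] at h3
    exact h3.congr fun k => (Lp.norm_def _).symm
  have KEY : ∀ h : Lp (EuclideanSpace ℝ (Fin n)) p P,
      Tendsto (fun zτ : Lp (EuclideanSpace ℝ (Fin n)) p P × ℝ =>
        (zτ.2)⁻¹ • (F (zτ.1 + zτ.2 • h) - F zτ.1 - zτ.2 • A h))
        ((𝓝 x) ×ˢ (𝓝[>] 0)) (𝓝 0) := by
    intro h
    apply tendsto_of_subseq_tendsto
    intro ns hns
    exact ⟨id, SEQ h (fun k => (ns k).1) (fun k => (ns k).2)
      (tendsto_fst.comp hns) ((tendsto_snd.comp hns).mono_right nhdsWithin_le_nhds)⟩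
  exact stmt6_abstract F Y hYconv x hxY A Cf hFLip KEY
end

section
/- Let 𝒳, 𝒴 be normed spaces, F : 𝒳 → 𝒴, Y ⊂ 𝒴 closed, X ⊂ 𝒳 closed, and suppose the system {F(x) ∈ Y, x ∈ X} is metrically subregular at a feasible point x̂ with constant C̄: for all x in a neighborhood of x̂, dist(x, X ∩ F^{-1}(Y)) ≤ C̄ (dist(F(x),Y) + dist(x,X)). If φ is Lipschitz with constant L_φ near x̂ and x̂ is a local minimizer of φ over X ∩ F^{-1}(Y), then for K > L_φ, x̂ is a local minimizer of x ↦ φ(x) + K C̄ (dist(F(x),Y) + dist(x,X)). -/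
open Metric
open scoped NNReal

/-- Exact penalization combined with metric subregularity: if the system
`{F(x) ∈ Y, x ∈ X}` is metrically subregular at a feasible local minimizer `x₀` of `φ`
over the feasible set, with constant `C̄`, and `φ` is Lipschitz with constant `L_φ`
near `x₀`, then for `K > L_φ` the point `x₀` is a local minimizer of
`x ↦ φ(x) + K·C̄·(dist(F(x),Y) + dist(x,X))`. -/
theorem stmt13 {𝒳 𝒴 : Type*} [NormedAddCommGroup 𝒳] [NormedSpace ℝ 𝒳]
    [NormedAddCommGroup 𝒴] [NormedSpace ℝ 𝒴]
    (F : 𝒳 → 𝒴) (Y : Set 𝒴) (hYcl : IsClosed Y) (X : Set 𝒳) (hXcl : IsClosed X)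
    (x₀ : 𝒳) (hfeas1 : F x₀ ∈ Y) (hfeas2 : x₀ ∈ X)
    (C : ℝ) (hC : 0 ≤ C)
    (hsubreg : ∃ δ > 0, ∀ x ∈ ball x₀ δ,
      infDist x (X ∩ F ⁻¹' Y) ≤ C * (infDist (F x) Y + infDist x X))
    (φ : 𝒳 → ℝ) (Lφ : ℝ≥0) (K : ℝ) (hK : (Lφ : ℝ) < K)
    (hlip : ∃ δ > 0, LipschitzOnWith Lφ φ (ball x₀ δ))
    (hmin : ∃ δ > 0, ∀ x ∈ (X ∩ F ⁻¹' Y) ∩ ball x₀ δ, φ x₀ ≤ φ x) :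
    ∃ ε > 0, ∀ x ∈ ball x₀ ε,
      φ x₀ ≤ φ x + K * C * (infDist (F x) Y + infDist x X) := by
  obtain ⟨δ₁, hδ₁, hsub⟩ := hsubreg
  obtain ⟨δ₂, hδ₂, hlip⟩ := hlip
  obtain ⟨δ₃, hδ₃, hmin⟩ := hmin
  set S : Set 𝒳 := X ∩ F ⁻¹' Y with hS
  have hx₀S : x₀ ∈ S := ⟨hfeas2, hfeas1⟩
  have hSne : S.Nonempty := ⟨x₀, hx₀S⟩
  set ε : ℝ := min δ₁ (min δ₂ δ₃) / 3 with hε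
  have hεpos : 0 < ε := by positivity
  refine ⟨ε, hεpos, fun x hx => ?_⟩
  have hxd : dist x x₀ < ε := mem_ball.mp hx
  have hd0 : 0 ≤ infDist x S := infDist_nonneg
  have hdε : infDist x S < ε := lt_of_le_of_lt (infDist_le_dist_of_mem hx₀S) hxd
  have hK0 : 0 < K := lt_of_le_of_lt Lφ.coe_nonneg hK
  have hε1 : 3 * ε ≤ δ₁ := by
    rw [hε]; nlinarith [min_le_left δ₁ (min δ₂ δ₃)]
  have hε2 : 3 * ε ≤ δ₂ := by
    rw [hε]; nlinarith [min_le_right δ₁ (min δ₂ δ₃), min_le_left δ₂ δ₃]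
  have hε3 : 3 * ε ≤ δ₃ := by
    rw [hε]; nlinarith [min_le_right δ₁ (min δ₂ δ₃), min_le_right δ₂ δ₃]
  have hKd : K * infDist x S ≤ K * C * (infDist (F x) Y + infDist x X) := by
    have := hsub x (by rw [mem_ball]; linarith)
    calc K * infDist x S ≤ K * (C * (infDist (F x) Y + infDist x X)) := by
          exact mul_le_mul_of_nonneg_left this hK0.le
      _ = K * C * (infDist (F x) Y + infDist x X) := by ring
  refine le_of_forall_pos_le_add fun η hη => ?_
  have hLp : (0:ℝ) < (Lφ : ℝ) + 1 := by positivity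
  set η' : ℝ := min (η / ((Lφ : ℝ) + 1)) ε with hη'
  have hη'pos : 0 < η' := lt_min (by positivity) hεpos
  obtain ⟨y, hyS, hyd⟩ : ∃ y ∈ S, dist x y < infDist x S + η' :=
    (infDist_lt_iff hSne).mp (by linarith)
  have hyx₀ : dist y x₀ < 3 * ε := by
    have h1 : η' ≤ ε := min_le_right _ _
    calc dist y x₀ ≤ dist y x + dist x x₀ := dist_triangle _ _ _
      _ < (infDist x S + η') + ε := by rw [dist_comm]; linarith
      _ < 3 * ε := by linarith
  have hφy : φ x₀ ≤ φ y := hmin y ⟨hyS, mem_ball.mpr (by linarith)⟩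
  have hlipxy : φ y ≤ φ x + (Lφ : ℝ) * dist x y := by
    have hyb : y ∈ ball x₀ δ₂ := mem_ball.mpr (by linarith)
    have hxb : x ∈ ball x₀ δ₂ := mem_ball.mpr (by linarith)
    have := hlip.dist_le_mul y hyb x hxb
    rw [Real.dist_eq] at this
    have := abs_le.mp this
    rw [dist_comm]
    linarith [this.1]
  have hLη : (Lφ : ℝ) * η' ≤ η := by
    have h1 : η' ≤ η / ((Lφ : ℝ) + 1) := min_le_left _ _
    have h2 : ((Lφ : ℝ) + 1) * η' ≤ η := by
      calc ((Lφ : ℝ) + 1) * η' ≤ ((Lφ : ℝ) + 1) * (η / ((Lφ : ℝ) + 1)) :=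
            mul_le_mul_of_nonneg_left h1 hLp.le
        _ = η := by field_simp
    nlinarith [hη'pos]
  have hLd : (Lφ : ℝ) * infDist x S ≤ K * infDist x S :=
    mul_le_mul_of_nonneg_right hK.le hd0
  calc φ x₀ ≤ φ x + (Lφ : ℝ) * dist x y := le_trans hφy hlipxy
    _ ≤ φ x + (Lφ : ℝ) * (infDist x S + η') :=
        by nlinarith [Lφ.coe_nonneg]
    _ ≤ φ x + K * infDist x S + η := by nlinarith
    _ ≤ φ x + K * C * (infDist (F x) Y + infDist x X) + η := by linarith
end
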